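/- arXiv:1607.07486 — 2 statements merged into one kernel-verified Lean document; each statement's English description precedes it below -/
import Mathlib

section
/- For every μ ∈ C, the curve l(t, μ) = (t, t^2 + μ(t - t^3), t^3, 1 - 3μ(t - t^3)) satisfies: (i) it is legendrian for the form 3y dx - 3x dy + w dz - z dw, i.e., 3y x' - 3x y' + w z' - z w' = 0 identically in t; (ii) l(0, μ) = (0,0,0,1), l(1, μ) = (1,1,1,1), l(-1, μ) = (-1,1,-1,1). -/
/-! Writing `p = t - t³`, the form evaluates along the curve to
`3μ ((1 - 3t²) p - (t - t³) p')`, which vanishes because `p' = 1 - 3t²`. -/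

section

variable {𝕜 : Type*} [NontriviallyNormedField 𝕜]

theorem hasDerivAt_sub_pow_three (t : 𝕜) :
    HasDerivAt (fun u : 𝕜 => u - u ^ 3) (1 - 3 * t ^ 2) t :=
  ((hasDerivAt_id' t).sub (hasDerivAt_pow 3 t)).congr_deriv (by norm_num)

theorem deriv_sq_add_mul_sub_pow_three (μ t : 𝕜) :
    deriv (fun u : 𝕜 => u ^ 2 + μ * (u - u ^ 3)) t = 2 * t + μ * (1 - 3 * t ^ 2) :=
  (((hasDerivAt_pow 2 t).add ((hasDerivAt_sub_pow_three t).const_mul μ)).congr_deriv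
    (by norm_num)).deriv

theorem deriv_one_sub_mul_sub_pow_three (c t : 𝕜) :
    deriv (fun u : 𝕜 => 1 - c * (u - u ^ 3)) t = -(c * (1 - 3 * t ^ 2)) :=
  (((hasDerivAt_sub_pow_three t).const_mul c).const_sub 1).deriv

end

/-- For every μ, the curve l(t, μ) = (t, t² + μ(t - t³), t³, 1 - 3μ(t - t³)) is
legendrian for 3y dx - 3x dy + w dz - z dw, and it passes through (0,0,0,1),
(1,1,1,1), (-1,1,-1,1) at t = 0, 1, -1 respectively. -/
theorem stmt10 (μ : ℂ) :
    (∀ t : ℂ,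
      3 * (t ^ 2 + μ * (t - t ^ 3)) * deriv (fun u : ℂ => u) t
        - 3 * t * deriv (fun u : ℂ => u ^ 2 + μ * (u - u ^ 3)) t
        + (1 - 3 * μ * (t - t ^ 3)) * deriv (fun u : ℂ => u ^ 3) t
        - t ^ 3 * deriv (fun u : ℂ => 1 - 3 * μ * (u - u ^ 3)) t = 0) ∧
    ((0 : ℂ), (0 : ℂ) ^ 2 + μ * (0 - (0 : ℂ) ^ 3), (0 : ℂ) ^ 3,
        1 - 3 * μ * (0 - (0 : ℂ) ^ 3)) = (0, 0, 0, 1) ∧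
    ((1 : ℂ), (1 : ℂ) ^ 2 + μ * (1 - (1 : ℂ) ^ 3), (1 : ℂ) ^ 3,
        1 - 3 * μ * (1 - (1 : ℂ) ^ 3)) = (1, 1, 1, 1) ∧
    ((-1 : ℂ), (-1 : ℂ) ^ 2 + μ * (-1 - (-1 : ℂ) ^ 3), (-1 : ℂ) ^ 3,
        1 - 3 * μ * (-1 - (-1 : ℂ) ^ 3)) = (-1, 1, -1, 1) := by
  refine ⟨fun t => ?_, by norm_num, by norm_num, by norm_num⟩
  simp only [deriv_id'', deriv_sq_add_mul_sub_pow_three, deriv_pow_field,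
    deriv_one_sub_mul_sub_pow_three]
  ring
end

section
/- Suppose a cubic curve γ(t) = (a_1 t + a_2 t^2 + a_3 t^3, b_1 t + b_2 t^2 + b_3 t^3, c_1 t + c_2 t^2 + c_3 t^3, 1 + d_1 t + d_2 t^2 + d_3 t^3) passes through (1,1,1,1) at t = 1 and through (-1,1,-1,1) at t = -1 (exactly, not just projectively), and is legendrian for 3y dx - 3x dy + w dz - z dw. Then either the third coordinate is identically zero (degenerate case with c_1=a_2=c_2=c_3=0 forcing z ≡ 0), or there exists μ ∈ C such that γ(t) = (t, t^2 + μ(t - t^3), t^3, 1 - 3μ(t - t^3)). -/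
/-!
Expanding the legendrian condition gives a polynomial identity of degree 4 in `t`, so its
coefficients vanish. The constant and linear ones give `c₁ = c₂ = 0`, hence `z = t³`. The
endpoint conditions fix the even parts `a₂ = 0`, `b₂ = 1`, `d₂ = 0` and give `b₃ = -b₁`; the
coefficients of `t²` and `t³` then force `a₁ = 1` and `d₁ = -3b₁`, leaving `μ = b₁` free.
-/
open Polynomial

theorem hasDerivAt_cubic {𝕜 : Type*} [NontriviallyNormedField 𝕜] (s p q r t : 𝕜) :
    HasDerivAt (fun u => s + p * u + q * u ^ 2 + r * u ^ 3) (p + 2 * q * t + 3 * r * t ^ 2) t := by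
  have h := (((hasDerivAt_id t).const_mul p).const_add s).add
    ((hasDerivAt_pow 2 t).const_mul q) |>.add ((hasDerivAt_pow 3 t).const_mul r)
  exact h.congr_deriv (by push_cast; ring)

theorem deriv_cubic {𝕜 : Type*} [NontriviallyNormedField 𝕜] (p q r t : 𝕜) :
    deriv (fun u => p * u + q * u ^ 2 + r * u ^ 3) t = p + 2 * q * t + 3 * r * t ^ 2 := by
  simpa only [zero_add] using (hasDerivAt_cubic 0 p q r t).deriv

theorem eq_zero_of_forall_quartic_eq_zero {R : Type*} [CommRing R] [IsDomain R] [Infinite R]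
    {k0 k1 k2 k3 k4 : R}
    (h : ∀ t : R, k0 + k1 * t + k2 * t ^ 2 + k3 * t ^ 3 + k4 * t ^ 4 = 0) :
    k0 = 0 ∧ k1 = 0 ∧ k2 = 0 ∧ k3 = 0 ∧ k4 = 0 := by
  have hp : C k0 + C k1 * X + C k2 * X ^ 2 + C k3 * X ^ 3 + C k4 * X ^ 4 = 0 :=
    Polynomial.funext fun t => by simpa using h t
  have hcoeff n := congrArg (coeff · n) hp
  refine ⟨?_, ?_, ?_, ?_, ?_⟩
  · simpa [coeff_X, coeff_C] using hcoeff 0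
  · simpa [coeff_X, coeff_C] using hcoeff 1
  · simpa [coeff_X, coeff_C] using hcoeff 2
  · simpa [coeff_X, coeff_C] using hcoeff 3
  · simpa [coeff_X, coeff_C] using hcoeff 4

theorem stmt11_general (a1 a2 a3 b1 b2 b3 c1 c2 c3 d1 d2 d3 : ℂ)
    (hx1 : a1 + a2 + a3 = 1) (hy1 : b1 + b2 + b3 = 1)
    (hz1 : c1 + c2 + c3 = 1) (hw1 : 1 + d1 + d2 + d3 = 1)
    (hx2 : -a1 + a2 - a3 = -1) (hy2 : -b1 + b2 - b3 = 1)
    (hw2 : 1 - d1 + d2 - d3 = 1)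
    (hleg : ∀ t : ℂ,
      3 * (b1 * t + b2 * t ^ 2 + b3 * t ^ 3) *
          deriv (fun u => a1 * u + a2 * u ^ 2 + a3 * u ^ 3) t
        - 3 * (a1 * t + a2 * t ^ 2 + a3 * t ^ 3) *
          deriv (fun u => b1 * u + b2 * u ^ 2 + b3 * u ^ 3) t
        + (1 + d1 * t + d2 * t ^ 2 + d3 * t ^ 3) *
          deriv (fun u => c1 * u + c2 * u ^ 2 + c3 * u ^ 3) t
        - (c1 * t + c2 * t ^ 2 + c3 * t ^ 3) *
          deriv (fun u => 1 + d1 * u + d2 * u ^ 2 + d3 * u ^ 3) t = 0) :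
    (∀ t : ℂ, c1 * t + c2 * t ^ 2 + c3 * t ^ 3 = 0) ∨
    ∃ μ : ℂ, ∀ t : ℂ,
      a1 * t + a2 * t ^ 2 + a3 * t ^ 3 = t ∧
      b1 * t + b2 * t ^ 2 + b3 * t ^ 3 = t ^ 2 + μ * (t - t ^ 3) ∧
      c1 * t + c2 * t ^ 2 + c3 * t ^ 3 = t ^ 3 ∧
      1 + d1 * t + d2 * t ^ 2 + d3 * t ^ 3 = 1 - 3 * μ * (t - t ^ 3) := by
  have hpoly : ∀ t : ℂ, c1 + 2 * c2 * t
      + (3 * (a2 * b1 - a1 * b2) + 3 * c3 + c2 * d1 - c1 * d2) * t ^ 2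
      + (6 * (a3 * b1 - a1 * b3) + 2 * (c3 * d1 - c1 * d3)) * t ^ 3
      + (3 * (a3 * b2 - a2 * b3) + c3 * d2 - c2 * d3) * t ^ 4 = 0 := fun t => by
    have h := hleg t
    rw [deriv_cubic, deriv_cubic, deriv_cubic, (hasDerivAt_cubic 1 d1 d2 d3 t).deriv] at h
    linear_combination h
  obtain ⟨rfl, hc2, hk2, hk3, -⟩ := eq_zero_of_forall_quartic_eq_zero hpoly
  obtain rfl : c2 = 0 := by linear_combination hc2 / 2
  obtain rfl : c3 = 1 := by linear_combination hz1
  obtain rfl : a2 = 0 := by linear_combination (hx1 + hx2) / 2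
  obtain rfl : b2 = 1 := by linear_combination (hy1 + hy2) / 2
  obtain rfl : d2 = 0 := by linear_combination (hw1 + hw2) / 2
  obtain rfl : a1 = 1 := by linear_combination -hk2 / 3
  obtain rfl : a3 = 0 := by linear_combination hx1
  obtain rfl : b3 = -b1 := by linear_combination (hy1 - hy2) / 2
  obtain rfl : d1 = -3 * b1 := by linear_combination hk3 / 2
  obtain rfl : d3 = 3 * b1 := by linear_combination hw1
  exact Or.inr ⟨b1, fun t => ⟨by ring, by ring, by ring, by ring⟩⟩

/-- A rational cubic γ(t) = (a₁t + a₂t² + a₃t³, b₁t + b₂t² + b₃t³,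
c₁t + c₂t² + c₃t³, 1 + d₁t + d₂t² + d₃t³) passing exactly through (1,1,1,1) at
t = 1 and (-1,1,-1,1) at t = -1 which is legendrian for
3y dx - 3x dy + w dz - z dw is either degenerate (z ≡ 0) or equals
(t, t² + μ(t - t³), t³, 1 - 3μ(t - t³)) for some μ ∈ ℂ. -/
theorem stmt11 (a1 a2 a3 b1 b2 b3 c1 c2 c3 d1 d2 d3 : ℂ)
    (hx1 : a1 + a2 + a3 = 1) (hy1 : b1 + b2 + b3 = 1)
    (hz1 : c1 + c2 + c3 = 1) (hw1 : 1 + d1 + d2 + d3 = 1)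
    (hx2 : -a1 + a2 - a3 = -1) (hy2 : -b1 + b2 - b3 = 1)
    (hz2 : -c1 + c2 - c3 = -1) (hw2 : 1 - d1 + d2 - d3 = 1)
    (hleg : ∀ t : ℂ,
      3 * (b1 * t + b2 * t ^ 2 + b3 * t ^ 3) *
          deriv (fun u => a1 * u + a2 * u ^ 2 + a3 * u ^ 3) t
        - 3 * (a1 * t + a2 * t ^ 2 + a3 * t ^ 3) *
          deriv (fun u => b1 * u + b2 * u ^ 2 + b3 * u ^ 3) t
        + (1 + d1 * t + d2 * t ^ 2 + d3 * t ^ 3) *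
          deriv (fun u => c1 * u + c2 * u ^ 2 + c3 * u ^ 3) t
        - (c1 * t + c2 * t ^ 2 + c3 * t ^ 3) *
          deriv (fun u => 1 + d1 * u + d2 * u ^ 2 + d3 * u ^ 3) t = 0) :
    (∀ t : ℂ, c1 * t + c2 * t ^ 2 + c3 * t ^ 3 = 0) ∨
    ∃ μ : ℂ, ∀ t : ℂ,
      a1 * t + a2 * t ^ 2 + a3 * t ^ 3 = t ∧
      b1 * t + b2 * t ^ 2 + b3 * t ^ 3 = t ^ 2 + μ * (t - t ^ 3) ∧
      c1 * t + c2 * t ^ 2 + c3 * t ^ 3 = t ^ 3 ∧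
      1 + d1 * t + d2 * t ^ 2 + d3 * t ^ 3 = 1 - 3 * μ * (t - t ^ 3) :=
  stmt11_general a1 a2 a3 b1 b2 b3 c1 c2 c3 d1 d2 d3 hx1 hy1 hz1 hw1 hx2 hy2 hw2 hleg
end
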